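/- Let N ≥ 1 and n ≥ 1 be integers, let R > 0, and let z ∈ ℂ^N with ‖z‖ ≥ R. Then the supremum of |f(z)| over all polynomials f ∈ ℂ[z_1,…,z_N] of total degree at most n satisfying |f(w)| ≤ 1 for all w in the closed ball B(0,R) = {w ∈ ℂ^N : ‖w‖ ≤ R} equals (‖z‖/R)^n. -/

import Mathlib

/-!
Upper bound: restricted to the complex line through `z`, a polynomial of total degree `≤ n`
becomes a one-variable polynomial `P` of degree `≤ n` with `|P| ≤ 1` on the disc of radius
`r = R / ‖z‖ ≤ 1`. The reversed polynomial `tⁿ P(1/t)` is then bounded by `r⁻ⁿ` on the circle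
`|t| = 1/r`, hence on the disc it bounds, by the maximum modulus principle; evaluating at `t = 1`
gives `|f(z)| = |P(1)| ≤ (‖z‖ / R)ⁿ`.
Lower bound: `w ↦ (⟪z, w⟫ / (‖z‖ R))ⁿ` is bounded by `1` on the ball by Cauchy–Schwarz and
takes the value `(‖z‖ / R)ⁿ` at `z`.
-/

open MvPolynomial

namespace Polynomial

theorem eval_reflect_inv_mul_pow {K : Type*} [Field K] {P : K[X]} {n : ℕ} (hP : P.natDegree ≤ n)
    {t : K} (ht : t ≠ 0) : (reflect n P).eval t⁻¹ * t ^ n = P.eval t := by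
  let := invertibleOfNonzero ht
  simpa only [invOf_eq_inv, eval₂_id] using eval₂_reflect_mul_pow (RingHom.id K) t n P hP

theorem norm_eval_le_of_forall_norm_eval_le {P : ℂ[X]} {n : ℕ} (hP : P.natDegree ≤ n)
    {r M : ℝ} (hr : 0 < r) (hM : ∀ w : ℂ, ‖w‖ ≤ r → ‖P.eval w‖ ≤ M)
    {s : ℂ} (hs : r ≤ ‖s‖) : ‖P.eval s‖ ≤ M * (‖s‖ / r) ^ n := by
  have hreflect : ∀ u : ℂ, ‖u‖ ≤ r⁻¹ → ‖(reflect n P).eval u‖ ≤ M * r⁻¹ ^ n := by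
    intro u hu
    refine Complex.norm_le_of_forall_mem_frontier_norm_le Metric.isBounded_ball
      (reflect n P).differentiable.diffContOnCl (fun v hv => ?_)
      (by rwa [closure_ball 0 (inv_pos.2 hr).ne', mem_closedBall_zero_iff])
    rw [frontier_ball 0 (inv_pos.2 hr).ne', mem_sphere_zero_iff_norm] at hv
    have hv0 : v⁻¹ ≠ 0 := inv_ne_zero (norm_pos_iff.1 (hv ▸ inv_pos.2 hr))
    have hvr : ‖v⁻¹‖ = r := by rw [norm_inv, hv, inv_inv]
    have hPv := eval_reflect_inv_mul_pow hP hv0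
    rw [inv_inv] at hPv
    rw [← mul_div_cancel_right₀ ((reflect n P).eval v) (pow_ne_zero n hv0), hPv, norm_div,
      norm_pow, hvr, div_eq_mul_inv, ← inv_pow]
    exact mul_le_mul_of_nonneg_right (hM _ hvr.le) (by positivity)
  have hs0 : s ≠ 0 := norm_pos_iff.1 (hr.trans_le hs)
  calc ‖P.eval s‖ = ‖(reflect n P).eval s⁻¹‖ * ‖s‖ ^ n := by
        rw [← eval_reflect_inv_mul_pow hP hs0, norm_mul, norm_pow]
    _ ≤ M * r⁻¹ ^ n * ‖s‖ ^ n := by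
        gcongr
        exact hreflect _ (by rw [norm_inv]; exact inv_anti₀ hr hs)
    _ = M * (‖s‖ / r) ^ n := by rw [mul_assoc, ← mul_pow, inv_mul_eq_div]

end Polynomial

namespace MvPolynomial

variable {σ R : Type*} [CommSemiring R]

noncomputable def restrictToLine (z : σ → R) : MvPolynomial σ R →ₐ[R] Polynomial R :=
  aeval fun i => Polynomial.C (z i) * Polynomial.X

theorem eval_restrictToLine (z : σ → R) (f : MvPolynomial σ R) (t : R) :
    (restrictToLine z f).eval t = eval (t • z) f := by
  induction f using MvPolynomial.induction_on with
  | C a => simp [restrictToLine]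
  | add p q hp hq => simp [hp, hq]
  | mul_X p i hp =>
    simp only [restrictToLine] at hp
    simp only [restrictToLine, map_mul, Polynomial.eval_mul, hp, aeval_X, Polynomial.eval_C,
      Polynomial.eval_X, eval_X, Pi.smul_apply, smul_eq_mul]
    ring

theorem natDegree_restrictToLine_le (z : σ → R) (f : MvPolynomial σ R) :
    (restrictToLine z f).natDegree ≤ f.totalDegree := by
  conv_lhs => rw [f.as_sum, map_sum]
  refine Polynomial.natDegree_sum_le_of_forall_le _ _ fun d hd => ?_
  rw [restrictToLine, aeval_monomial, Polynomial.algebraMap_apply, Algebra.algebraMap_self,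
    RingHom.id_apply]
  refine (Polynomial.natDegree_C_mul_le _ _).trans <|
    (Polynomial.natDegree_prod_le _ _).trans <| le_trans ?_ (le_totalDegree hd)
  refine Finset.sum_le_sum fun i _ => ?_
  simpa using Polynomial.natDegree_pow_le_of_le (d i)
    ((Polynomial.natDegree_C_mul_le (z i) _).trans Polynomial.natDegree_X_le)

section Fintype

variable [Fintype σ]

noncomputable def linearForm (a : σ → R) : MvPolynomial σ R := ∑ i, C (a i) * X i

theorem eval_linearForm (a w : σ → R) : eval w (linearForm a) = ∑ i, a i * w i := by
  simp [linearForm]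

theorem totalDegree_linearForm_le (a : σ → R) : (linearForm a).totalDegree ≤ 1 :=
  totalDegree_finsetSum_le fun i _ => (totalDegree_mul _ _).trans <| by
    simpa [X] using totalDegree_monomial_le (Finsupp.single i 1) (1 : R)

end Fintype

section EuclideanSpace

variable {ι : Type*} [Fintype ι]

theorem eval_linearForm_conj_eq_inner (z w : EuclideanSpace ℂ ι) :
    eval (fun i => w i) (linearForm fun i => starRingEnd ℂ (z i)) = inner ℂ z w := by
  simp [eval_linearForm, PiLp.inner_apply, mul_comm]

theorem norm_eval_le_of_forall_norm_eval_le {f : MvPolynomial ι ℂ} {n : ℕ}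
    (hf : f.totalDegree ≤ n) {R M : ℝ} (hR : 0 < R)
    (hM : ∀ w : EuclideanSpace ℂ ι, ‖w‖ ≤ R → ‖eval (fun i => w i) f‖ ≤ M)
    {z : EuclideanSpace ℂ ι} (hz : R ≤ ‖z‖) : ‖eval (fun i => z i) f‖ ≤ M * (‖z‖ / R) ^ n := by
  have hz0 : 0 < ‖z‖ := hR.trans_le hz
  have hline : ∀ t : ℂ, (restrictToLine (fun i => z i) f).eval t = eval (fun i => (t • z) i) f :=
    fun t => eval_restrictToLine _ f t
  have hdisc : ∀ t : ℂ, ‖t‖ ≤ R / ‖z‖ → ‖(restrictToLine (fun i => z i) f).eval t‖ ≤ M := by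
    intro t ht
    refine hline t ▸ hM _ ?_
    rw [norm_smul]
    exact (le_div_iff₀ hz0).1 ht
  have := Polynomial.norm_eval_le_of_forall_norm_eval_le
    ((natDegree_restrictToLine_le _ f).trans hf) (div_pos hR hz0) hdisc (s := 1)
    (by simpa using (div_le_one hz0).2 hz)
  simpa [hline, one_div_div] using this

theorem exists_norm_eval_le_one_on_closedBall_and_norm_eval_eq {n : ℕ} {R : ℝ} (hR : 0 < R)
    (z : EuclideanSpace ℂ ι) : ∃ f : MvPolynomial ι ℂ, f.totalDegree ≤ n ∧
      (∀ w : EuclideanSpace ℂ ι, ‖w‖ ≤ R → ‖eval (fun i => w i) f‖ ≤ 1) ∧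
      ‖eval (fun i => z i) f‖ = (‖z‖ / R) ^ n := by
  set c : ℂ := ((‖z‖ * R : ℝ) : ℂ)⁻¹
  have heval : ∀ w : EuclideanSpace ℂ ι,
      ‖eval (fun i => w i) ((C c * linearForm fun i => starRingEnd ℂ (z i)) ^ n)‖ =
        (‖inner ℂ z w‖ / (‖z‖ * R)) ^ n := by
    intro w
    rw [map_pow, eval_mul, eval_C, eval_linearForm_conj_eq_inner, norm_pow, norm_mul, norm_inv,
      Complex.norm_real, Real.norm_of_nonneg (by positivity), inv_mul_eq_div]
  refine ⟨(C c * linearForm fun i => starRingEnd ℂ (z i)) ^ n, ?_, fun w hw => ?_, ?_⟩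
  · have hdeg : (C c * linearForm fun i => starRingEnd ℂ (z i)).totalDegree ≤ 1 :=
      (totalDegree_mul _ _).trans (by simpa using totalDegree_linearForm_le _)
    exact (totalDegree_pow _ n).trans (by simpa using Nat.mul_le_mul_left n hdeg)
  · rw [heval]
    refine pow_le_one₀ (by positivity) (div_le_one_of_le₀ ?_ (by positivity))
    exact (norm_inner_le_norm z w).trans (by gcongr)
  · rw [heval, inner_self_eq_norm_sq_to_K, norm_pow, RCLike.norm_ofReal, abs_norm]
    rcases eq_or_ne ‖z‖ 0 with hz | hz
    · simp [hz]
    · rw [sq, mul_div_mul_left _ _ hz]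

end EuclideanSpace

end MvPolynomial

theorem extremal_sup_ball_eq_general (N n : ℕ)
    (R : ℝ) (hR : 0 < R) (z : EuclideanSpace ℂ (Fin N)) (hz : R ≤ ‖z‖) :
    (⨆ f : {f : MvPolynomial (Fin N) ℂ // f.totalDegree ≤ n ∧
        ∀ w : EuclideanSpace ℂ (Fin N), ‖w‖ ≤ R →
          ‖MvPolynomial.eval (fun i => w i) f‖ ≤ 1},
      ENNReal.ofReal ‖MvPolynomial.eval (fun i => z i) f.1‖) =
    ENNReal.ofReal ((‖z‖ / R) ^ n) := by
  refine le_antisymm (iSup_le fun ⟨f, hdeg, hbound⟩ => ENNReal.ofReal_le_ofReal ?_) ?_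
  · simpa using norm_eval_le_of_forall_norm_eval_le hdeg hR hbound hz
  · obtain ⟨f, hdeg, hbound, hvalue⟩ :=
      exists_norm_eval_le_one_on_closedBall_and_norm_eval_eq (n := n) hR z
    exact hvalue ▸ le_iSup_of_le ⟨f, hdeg, hbound⟩ le_rfl

/-- Let `N ≥ 1`, `n ≥ 1`, `R > 0`, and let `z ∈ ℂ^N` with
`‖z‖ ≥ R`. The supremum of `|f(z)|` over all polynomials `f` in `N` complex
variables of total degree at most `n` satisfying `|f(w)| ≤ 1` on the closed
Euclidean ball `B(0,R) = {w : ‖w‖ ≤ R}` equals `(‖z‖/R)^n`. -/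
theorem extremal_sup_ball_eq (N n : ℕ) (hN : 1 ≤ N) (hn : 1 ≤ n)
    (R : ℝ) (hR : 0 < R) (z : EuclideanSpace ℂ (Fin N)) (hz : R ≤ ‖z‖) :
    (⨆ f : {f : MvPolynomial (Fin N) ℂ // f.totalDegree ≤ n ∧
        ∀ w : EuclideanSpace ℂ (Fin N), ‖w‖ ≤ R →
          ‖MvPolynomial.eval (fun i => w i) f‖ ≤ 1},
      ENNReal.ofReal ‖MvPolynomial.eval (fun i => z i) f.1‖) =
    ENNReal.ofReal ((‖z‖ / R) ^ n) :=
  extremal_sup_ball_eq_general N n R hR z hz
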